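/- arXiv:1502.03715 — 7 statements merged into one kernel-verified Lean document; each statement's English description precedes it below -/
import Mathlib

section
/- Let x* be a feasible solution of the s-t-path TSP LP on a finite vertex set V with distinct s,t ∈ V (i.e., x* ≥ 0, x*(δ(U)) ≥ 2 for all nonempty proper subsets U of V containing both or neither of s,t, x*(δ(U)) ≥ 1 for all nonempty proper subsets U with |U ∩ {s,t}| odd, x*(δ(v)) = 2 for v ∉ {s,t}, and x*(δ(s)) = x*(δ(t)) = 1). Define the narrow cuts as those cuts δ(U) with x*(δ(U)) < 2. Then the family of vertex sets U with s ∈ U, t ∉ U and x*(δ(U)) < 2 forms a chain under inclusion: for any two such sets U', U'', either U' ⊆ U'' or U'' ⊆ U'. -/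
/-!
If neither of `U'`, `U''` contains the other, then `U' \ U''` and `U'' \ U'` are nonempty and
avoid both `s` and `t`, so their cuts have weight at least `2`. Posimodularity of cut functions,
`x(δ(U')) + x(δ(U'')) ≥ x(δ(U' \ U'')) + x(δ(U'' \ U'))`, then contradicts the narrowness of
`δ(U')` and `δ(U'')`.
-/

open Finset

noncomputable def cut {V : Type*} [Fintype V] [DecidableEq V] (U : Finset V) :
    Finset (Sym2 V) :=
  Finset.univ.filter (fun e => ∃ u v : V, e = s(u, v) ∧ u ∈ U ∧ v ∉ U)

def IsSpanningTree {V : Type*} [Fintype V] (S : Finset (Sym2 V)) : Prop :=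
  (SimpleGraph.fromEdgeSet (↑S : Set (Sym2 V))).IsTree ∧ ∀ e ∈ S, ¬ e.IsDiag

section Posimodular

variable {V : Type*} [Fintype V] [DecidableEq V]

theorem mk_mem_cut_iff {U : Finset V} {u v : V} :
    s(u, v) ∈ cut U ↔ (u ∈ U ∧ v ∉ U) ∨ (v ∈ U ∧ u ∉ U) := by
  simp only [cut, mem_filter, mem_univ, true_and, Sym2.eq_iff]
  constructor
  · rintro ⟨a, b, ⟨rfl, rfl⟩ | ⟨rfl, rfl⟩, ha, hb⟩
    exacts [.inl ⟨ha, hb⟩, .inr ⟨ha, hb⟩]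
  · rintro (⟨hu, hv⟩ | ⟨hv, hu⟩)
    exacts [⟨u, v, .inl ⟨rfl, rfl⟩, hu, hv⟩, ⟨v, u, .inr ⟨rfl, rfl⟩, hv, hu⟩]

theorem sum_cut_eq_sum_ite (x : Sym2 V → ℝ) (U : Finset V) :
    ∑ e ∈ cut U, x e = ∑ e, if e ∈ cut U then x e else 0 := by
  rw [sum_ite_mem, univ_inter]

/-- An edge crossing `A \ B` or `B \ A` crosses `A` or `B`, and one crossing both crosses both. -/
theorem ite_mem_cut_sdiff_add_le {x : Sym2 V → ℝ} (hx : ∀ e, 0 ≤ x e) (A B : Finset V)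
    (e : Sym2 V) :
    (if e ∈ cut (A \ B) then x e else 0) + (if e ∈ cut (B \ A) then x e else 0) ≤
      (if e ∈ cut A then x e else 0) + (if e ∈ cut B then x e else 0) := by
  induction e using Sym2.ind with
  | _ u v =>
    have := hx s(u, v)
    simp only [mk_mem_cut_iff, mem_sdiff]
    by_cases u ∈ A <;> by_cases u ∈ B <;> by_cases v ∈ A <;> by_cases v ∈ B <;>
      simp_all

theorem sum_cut_sdiff_add_sum_cut_sdiff_le {x : Sym2 V → ℝ} (hx : ∀ e, 0 ≤ x e)
    (A B : Finset V) :
    ∑ e ∈ cut (A \ B), x e + ∑ e ∈ cut (B \ A), x e ≤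
      ∑ e ∈ cut A, x e + ∑ e ∈ cut B, x e := by
  simp only [sum_cut_eq_sum_ite, ← sum_add_distrib]
  exact sum_le_sum fun e _ => ite_mem_cut_sdiff_add_le hx A B e

end Posimodular

theorem narrow_cuts_chain_general {V : Type*} [Fintype V] [DecidableEq V] (s t : V)
    (x : Sym2 V → ℝ) (hx0 : ∀ e, 0 ≤ x e)
    (heven : ∀ U : Finset V, U.Nonempty → U ≠ Finset.univ →
      ((s ∈ U) ↔ (t ∈ U)) → 2 ≤ ∑ e ∈ cut U, x e)
    (U' U'' : Finset V)
    (hU's : s ∈ U') (hU't : t ∉ U') (hU'n : ∑ e ∈ cut U', x e < 2)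
    (hU''s : s ∈ U'') (hU''t : t ∉ U'') (hU''n : ∑ e ∈ cut U'', x e < 2) :
    U' ⊆ U'' ∨ U'' ⊆ U' := by
  by_contra! hcross
  have wide_sdiff : ∀ A B : Finset V, s ∈ B → t ∉ A → ¬A ⊆ B → 2 ≤ ∑ e ∈ cut (A \ B), x e := by
    intro A B hsB htA hAB
    have hs : s ∉ A \ B := fun h => (mem_sdiff.1 h).2 hsB
    have ht : t ∉ A \ B := fun h => htA (mem_sdiff.1 h).1
    exact heven _ (sdiff_nonempty.2 hAB) (fun h => hs (h ▸ mem_univ s)) (iff_of_false hs ht)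
  have := sum_cut_sdiff_add_sum_cut_sdiff_le hx0 U' U''
  linarith [wide_sdiff U' U'' hU''s hU't hcross.1, wide_sdiff U'' U' hU's hU''t hcross.2]

/-- The narrow cuts of a feasible s-t-path TSP LP solution form a chain. -/
theorem narrow_cuts_chain {V : Type*} [Fintype V] [DecidableEq V] (s t : V) (hst : s ≠ t)
    (x : Sym2 V → ℝ) (hx0 : ∀ e, 0 ≤ x e)
    (heven : ∀ U : Finset V, U.Nonempty → U ≠ Finset.univ →
      ((s ∈ U) ↔ (t ∈ U)) → 2 ≤ ∑ e ∈ cut U, x e)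
    (hodd : ∀ U : Finset V, U.Nonempty → U ≠ Finset.univ →
      ¬((s ∈ U) ↔ (t ∈ U)) → 1 ≤ ∑ e ∈ cut U, x e)
    (hdeg : ∀ v : V, v ≠ s → v ≠ t → ∑ e ∈ cut {v}, x e = 2)
    (hdegs : ∑ e ∈ cut {s}, x e = 1) (hdegt : ∑ e ∈ cut {t}, x e = 1)
    (U' U'' : Finset V)
    (hU's : s ∈ U') (hU't : t ∉ U') (hU'n : ∑ e ∈ cut U', x e < 2)
    (hU''s : s ∈ U'') (hU''t : t ∉ U'') (hU''n : ∑ e ∈ cut U'', x e < 2) :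
    U' ⊆ U'' ∨ U'' ⊆ U' :=
  narrow_cuts_chain_general s t x hx0 heven U' U'' hU's hU't hU'n hU''s hU''t hU''n
end

section
/- Let x* be a feasible solution of the s-t-path TSP LP. Suppose U' ⊂ U'' are two vertex sets with s ∈ U', t ∉ U'', defining two distinct narrow cuts C = δ(U') and C' = δ(U'') (so x*(C) < 2 and x*(C') < 2). Then x*(C ∩ C') ≤ (1/2)x*(C) + (1/2)x*(C') − 1. -/
open Finset

/-! Uncrossing two nested cuts: for `U' ⊆ U''` an edge lies in exactly one of `δ(U')`, `δ(U'')`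
iff it crosses `δ(U'' \ U')`, so `x(δ(U')) + x(δ(U'')) = x(δ(U'' \ U')) + 2 x(δ(U') ∩ δ(U''))`.
The set `U'' \ U'` contains neither `s` nor `t`, so its cut has weight at least `2`. -/

theorem Finset.sum_symmDiff_add_two_nsmul_sum_inter {ι M : Type*} [DecidableEq ι]
    [AddCommMonoid M] (s t : Finset ι) (f : ι → M) :
    ∑ i ∈ symmDiff s t, f i + 2 • ∑ i ∈ s ∩ t, f i = ∑ i ∈ s, f i + ∑ i ∈ t, f i := by
  rw [symmDiff_eq_sup_sdiff_inf, sup_eq_union, inf_eq_inter, ← sum_union_inter, two_nsmul,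
    ← add_assoc, sum_sdiff inter_subset_union]

section Cut

variable {V : Type*} [Fintype V] [DecidableEq V]

theorem mem_cut_iff (U : Finset V) (u v : V) :
    s(u, v) ∈ cut U ↔ (u ∈ U ∧ v ∉ U) ∨ (v ∈ U ∧ u ∉ U) := by
  simp only [cut, mem_filter, mem_univ, true_and]
  constructor
  · rintro ⟨a, b, hab, ha, hb⟩
    rcases Sym2.eq_iff.mp hab with ⟨rfl, rfl⟩ | ⟨rfl, rfl⟩
    · exact Or.inl ⟨ha, hb⟩
    · exact Or.inr ⟨ha, hb⟩
  · rintro (⟨hu, hv⟩ | ⟨hv, hu⟩)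
    · exact ⟨u, v, rfl, hu, hv⟩
    · exact ⟨v, u, Sym2.eq_swap, hv, hu⟩

theorem cut_sdiff_of_subset {A B : Finset V} (h : A ⊆ B) :
    cut (B \ A) = symmDiff (cut A) (cut B) := by
  ext e
  induction e using Sym2.ind with
  | _ u v =>
    have hu := @h u
    have hv := @h v
    simp only [mem_symmDiff, mem_cut_iff, mem_sdiff]
    tauto

theorem sum_cut_add_sum_cut_of_subset {M : Type*} [AddCommMonoid M] (x : Sym2 V → M)
    {A B : Finset V} (h : A ⊆ B) :
    ∑ e ∈ cut A, x e + ∑ e ∈ cut B, x e =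
      ∑ e ∈ cut (B \ A), x e + 2 • ∑ e ∈ cut A ∩ cut B, x e := by
  rw [cut_sdiff_of_subset h, sum_symmDiff_add_two_nsmul_sum_inter]

end Cut

theorem narrow_cuts_small_intersection_general {V : Type*} [Fintype V] [DecidableEq V]
    (s t : V)
    (x : Sym2 V → ℝ)
    (heven : ∀ W : Finset V, W.Nonempty → W ≠ Finset.univ →
      ((s ∈ W) ↔ (t ∈ W)) → 2 ≤ ∑ e ∈ cut W, x e)
    (U' U'' : Finset V) (hsub : U' ⊂ U'')
    (hU's : s ∈ U') (hU''t : t ∉ U'') :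
    ∑ e ∈ cut U' ∩ cut U'', x e ≤
      (1/2) * (∑ e ∈ cut U', x e) + (1/2) * (∑ e ∈ cut U'', x e) - 1 := by
  obtain ⟨a, haU'', haU'⟩ := exists_of_ssubset hsub
  have hs : s ∉ U'' \ U' := fun h => (mem_sdiff.mp h).2 hU's
  have ht : t ∉ U'' \ U' := fun h => hU''t (mem_sdiff.mp h).1
  have hgap : 2 ≤ ∑ e ∈ cut (U'' \ U'), x e :=
    heven _ ⟨a, mem_sdiff.mpr ⟨haU'', haU'⟩⟩ (fun h => hs (h ▸ mem_univ s)) (iff_of_false hs ht)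
  have huncross := sum_cut_add_sum_cut_of_subset x hsub.subset
  rw [two_nsmul] at huncross
  linarith

/-- Two nested narrow cuts have small intersection. -/
theorem narrow_cuts_small_intersection {V : Type*} [Fintype V] [DecidableEq V]
    (s t : V) (hst : s ≠ t)
    (x : Sym2 V → ℝ) (hx0 : ∀ e, 0 ≤ x e)
    (heven : ∀ W : Finset V, W.Nonempty → W ≠ Finset.univ →
      ((s ∈ W) ↔ (t ∈ W)) → 2 ≤ ∑ e ∈ cut W, x e)
    (U' U'' : Finset V) (hsub : U' ⊂ U'')
    (hU's : s ∈ U') (hU''t : t ∉ U'')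
    (hU'n : ∑ e ∈ cut U', x e < 2) (hU''n : ∑ e ∈ cut U'', x e < 2) :
    ∑ e ∈ cut U' ∩ cut U'', x e ≤
      (1/2) * (∑ e ∈ cut U', x e) + (1/2) * (∑ e ∈ cut U'', x e) - 1 :=
  narrow_cuts_small_intersection_general s t x heven U' U'' hsub hU's hU''t
end

section
/- Let x* = Σ_S p_S χ^S be a convex combination of spanning trees, and let the narrow cuts be δ(L_0), …, δ(L_ℓ) for a chain {s} = L_0 ⊂ L_1 ⊂ ⋯ ⊂ L_ℓ = V\{t}. For each spanning tree S let I_S be its s-t-path. Then Σ_{C narrow} Σ_{S : |S∩C| = 1} p_S χ^{S∩C} ≤ Σ_S p_S χ^{I_S} (componentwise as vectors in ℝ^E). -/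
open Finset

/-!
Fix a tree `S` and an edge `e`. If `S ∩ δ(L i) = {e}`, then `e` lies on the `s`-`t` path of `S`,
since that path leaves `L i`. This happens for at most one `i`: if also `S ∩ δ(L j) = {e}` with
`i < j`, then `e` has no endpoint in `L j \ L i`, while every edge leaving `L j \ L i` lies in
`δ(L i) ∪ δ(L j)`; so no edge of `S` leaves the nonempty set `L j \ L i`, contradicting
connectivity. Weighting these per-tree bounds by `p S` and summing gives the inequality.
-/

theorem Finset.card_eq_one_and_mem_iff {α : Type*} {s : Finset α} {a : α} :
    #s = 1 ∧ a ∈ s ↔ s = {a} := by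
  constructor
  · rintro ⟨h1, h2⟩
    obtain ⟨b, rfl⟩ := card_eq_one.1 h1
    rw [mem_singleton.1 h2]
  · rintro rfl
    simp

section Cut

variable {V : Type*} [Fintype V] [DecidableEq V]

theorem mk_mem_cut {U : Finset V} {u v : V} : s(u, v) ∈ cut U ↔ Xor (u ∈ U) (v ∈ U) := by
  simp only [cut, mem_filter, mem_univ, true_and, Sym2.eq_iff]
  constructor
  · rintro ⟨a, b, (⟨rfl, rfl⟩ | ⟨rfl, rfl⟩), ha, hb⟩ <;> simp [Xor, ha, hb]
  · rintro (⟨hu, hv⟩ | ⟨hv, hu⟩)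
    · exact ⟨u, v, Or.inl ⟨rfl, rfl⟩, hu, hv⟩
    · exact ⟨v, u, Or.inr ⟨rfl, rfl⟩, hv, hu⟩

theorem cut_sdiff_subset (U W : Finset V) : cut (W \ U) ⊆ cut U ∪ cut W := by
  intro e
  induction e using Sym2.ind with
  | _ a b => simp only [mem_union, mk_mem_cut, mem_sdiff, Xor]; tauto

theorem notMem_cut_sdiff {U W : Finset V} (hUW : U ⊆ W) {e : Sym2 V} (hU : e ∈ cut U)
    (hW : e ∈ cut W) : e ∉ cut (W \ U) := by
  induction e using Sym2.ind with
  | _ a b =>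
    have ha := @hUW a
    have hb := @hUW b
    simp only [mk_mem_cut, mem_sdiff, Xor] at *
    tauto

theorem exists_mem_edges_inter_cut {S : Finset (Sym2 V)} {a b : V}
    (P : (SimpleGraph.fromEdgeSet (↑S : Set (Sym2 V))).Walk a b) {U : Finset V}
    (ha : a ∈ U) (hb : b ∉ U) : ∃ f ∈ P.edges, f ∈ S ∩ cut U := by
  obtain ⟨d, hd, h1, h2⟩ := P.exists_boundary_dart (↑U) ha hb
  have hedge : d.edge ∈ P.edges := List.mem_map_of_mem hd
  have hS := P.edges_subset_edgeSet hedge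
  rw [SimpleGraph.edgeSet_fromEdgeSet] at hS
  refine ⟨d.edge, hedge, mem_inter.2 ⟨hS.1, ?_⟩⟩
  rw [SimpleGraph.Dart.edge, mk_mem_cut]
  exact Or.inl ⟨h1, h2⟩

theorem mem_edges_of_inter_cut_eq_singleton {S : Finset (Sym2 V)} {a b : V}
    (P : (SimpleGraph.fromEdgeSet (↑S : Set (Sym2 V))).Walk a b) {U : Finset V}
    (ha : a ∈ U) (hb : b ∉ U) {e : Sym2 V} (he : S ∩ cut U = {e}) : e ∈ P.edges := by
  obtain ⟨f, hfP, hf⟩ := exists_mem_edges_inter_cut P ha hb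
  rw [he, mem_singleton] at hf
  exact hf ▸ hfP

theorem inter_cut_ne_singleton_of_ssubset {S : Finset (Sym2 V)}
    (hS : (SimpleGraph.fromEdgeSet (↑S : Set (Sym2 V))).Connected) {U W : Finset V}
    (hUW : U ⊂ W) {e : Sym2 V} (hU : S ∩ cut U = {e}) : S ∩ cut W ≠ {e} := by
  intro hW
  have heU : e ∈ cut U := (mem_inter.1 (hU ▸ mem_singleton_self e)).2
  have heW : e ∈ cut W := (mem_inter.1 (hW ▸ mem_singleton_self e)).2
  obtain ⟨u, hu⟩ : ∃ u, u ∈ U := by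
    induction e using Sym2.ind with
    | _ a b => rcases mk_mem_cut.1 heU with ⟨ha, -⟩ | ⟨hb, -⟩ <;> exact ⟨_, ‹_›⟩
  obtain ⟨w, hwW, hwU⟩ := exists_of_ssubset hUW
  obtain ⟨f, -, hf⟩ := exists_mem_edges_inter_cut (hS.preconnected w u).some
    (mem_sdiff.2 ⟨hwW, hwU⟩) (fun h => (mem_sdiff.1 h).2 hu)
  have hfe : f = e := by
    have := inter_subset_inter_left (cut_sdiff_subset U W) hf
    rw [inter_union_distrib_left, hU, hW, union_self] at this
    exact mem_singleton.1 this
  exact notMem_cut_sdiff hUW.subset heU heW (hfe ▸ (mem_inter.1 hf).2)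

theorem card_filter_inter_cut_eq_singleton_le_one {S : Finset (Sym2 V)}
    (hS : (SimpleGraph.fromEdgeSet (↑S : Set (Sym2 V))).Connected) {ℓ : ℕ} {L : ℕ → Finset V}
    (hL : StrictMonoOn L (Set.Iic ℓ)) (e : Sym2 V) :
    #{i ∈ range (ℓ + 1) | S ∩ cut (L i) = {e}} ≤ 1 := by
  refine card_le_one.2 fun i hi j hj => ?_
  simp only [mem_filter, mem_range, Nat.lt_succ_iff] at hi hj
  by_contra hij
  rcases Nat.lt_or_gt_of_ne hij with h | h
  · exact inter_cut_ne_singleton_of_ssubset hS (hL hi.1 hj.1 h) hi.2 hj.2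
  · exact inter_cut_ne_singleton_of_ssubset hS (hL hj.1 hi.1 h) hj.2 hi.2

theorem card_filter_inter_cut_eq_singleton_le {S : Finset (Sym2 V)}
    (hS : (SimpleGraph.fromEdgeSet (↑S : Set (Sym2 V))).Connected) {s t : V}
    (P : (SimpleGraph.fromEdgeSet (↑S : Set (Sym2 V))).Walk s t) {ℓ : ℕ} {L : ℕ → Finset V}
    (hL : StrictMonoOn L (Set.Iic ℓ)) (hs : ∀ i ≤ ℓ, s ∈ L i) (ht : ∀ i ≤ ℓ, t ∉ L i)
    (e : Sym2 V) :
    #{i ∈ range (ℓ + 1) | S ∩ cut (L i) = {e}} ≤ if e ∈ P.edges then 1 else 0 := by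
  split_ifs with he
  · exact card_filter_inter_cut_eq_singleton_le_one hS hL e
  · refine (card_eq_zero.2 (filter_eq_empty_iff.2 fun i hi hi' => he ?_)).le
    have hi := Nat.lt_succ_iff.1 (mem_range.1 hi)
    exact mem_edges_of_inter_cut_eq_singleton P (hs i hi) (ht i hi) hi'

end Cut

theorem sebo_packing_general {V : Type*} [Fintype V] [DecidableEq V]
    (s t : V)
    (𝒮 : Finset (Finset (Sym2 V)))
    (htree : ∀ S ∈ 𝒮, IsSpanningTree S)
    (p : Finset (Sym2 V) → ℝ) (hp0 : ∀ S ∈ 𝒮, 0 ≤ p S)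
    (I : Finset (Sym2 V) → Finset (Sym2 V))
    (hIpath : ∀ S ∈ 𝒮, ∃ P : (SimpleGraph.fromEdgeSet (↑S : Set (Sym2 V))).Walk s t,
      P.IsPath ∧ I S = P.edges.toFinset)
    (ℓ : ℕ) (L : ℕ → Finset V)
    (hL0 : L 0 = {s}) (hLl : L ℓ = Finset.univ \ {t})
    (hchain : ∀ i < ℓ, L i ⊂ L (i+1)) :
    ∀ e : Sym2 V,
      ∑ i ∈ Finset.range (ℓ+1),
        ∑ S ∈ 𝒮.filter (fun S => (S ∩ cut (L i)).card = 1),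
          p S * (if e ∈ S ∩ cut (L i) then 1 else 0)
      ≤ ∑ S ∈ 𝒮, p S * (if e ∈ I S then 1 else 0) := by
  intro e
  have hL : StrictMonoOn L (Set.Iic ℓ) := strictMonoOn_Iic_of_lt_succ hchain
  have hs : ∀ i ≤ ℓ, s ∈ L i := fun i hi =>
    hL.monotoneOn (Set.mem_Iic.2 ℓ.zero_le) hi i.zero_le (hL0 ▸ mem_singleton_self s)
  have ht : ∀ i ≤ ℓ, t ∉ L i := fun i hi h => by
    simpa [hLl] using hL.monotoneOn hi (Set.mem_Iic.2 le_rfl) hi h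
  simp only [sum_filter]
  rw [sum_comm]
  refine sum_le_sum fun S hS => ?_
  obtain ⟨P, -, hI⟩ := hIpath S hS
  simp only [mul_ite, mul_one, mul_zero, ← ite_and, card_eq_one_and_mem_iff, ← sum_filter,
    sum_const, nsmul_eq_mul, hI, List.mem_toFinset]
  calc (#{i ∈ range (ℓ + 1) | S ∩ cut (L i) = {e}} : ℝ) * p S
      ≤ ((if e ∈ P.edges then 1 else 0 : ℕ) : ℝ) * p S := by
        gcongr
        · exact hp0 S hS
        · exact card_filter_inter_cut_eq_singleton_le (htree S hS).1.connected P hL hs ht e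
    _ = if e ∈ P.edges then p S else 0 := by split_ifs <;> simp

/-- Sebő's packing inequality: the single tree edges in narrow cuts are
dominated by the s-t-paths of the trees, componentwise. -/
theorem sebo_packing {V : Type*} [Fintype V] [DecidableEq V]
    (s t : V) (hst : s ≠ t)
    (x : Sym2 V → ℝ) (𝒮 : Finset (Finset (Sym2 V)))
    (htree : ∀ S ∈ 𝒮, IsSpanningTree S)
    (p : Finset (Sym2 V) → ℝ) (hp0 : ∀ S ∈ 𝒮, 0 ≤ p S) (hp1 : ∑ S ∈ 𝒮, p S = 1)
    (hx : ∀ e, x e = ∑ S ∈ 𝒮, p S * (if e ∈ S then 1 else 0))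
    (I : Finset (Sym2 V) → Finset (Sym2 V))
    (hIpath : ∀ S ∈ 𝒮, ∃ P : (SimpleGraph.fromEdgeSet (↑S : Set (Sym2 V))).Walk s t,
      P.IsPath ∧ I S = P.edges.toFinset)
    (ℓ : ℕ) (L : ℕ → Finset V)
    (hL0 : L 0 = {s}) (hLl : L ℓ = Finset.univ \ {t})
    (hchain : ∀ i < ℓ, L i ⊂ L (i+1))
    (hnarrow : ∀ i ≤ ℓ, ∑ e ∈ cut (L i), x e < 2) :
    ∀ e : Sym2 V,
      ∑ i ∈ Finset.range (ℓ+1),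
        ∑ S ∈ 𝒮.filter (fun S => (S ∩ cut (L i)).card = 1),
          p S * (if e ∈ S ∩ cut (L i) then 1 else 0)
      ≤ ∑ S ∈ 𝒮, p S * (if e ∈ I S then 1 else 0) :=
  sebo_packing_general s t 𝒮 htree p hp0 I hIpath ℓ L hL0 hLl hchain
end

section
/- Let x* = Σ_S p_S χ^S be a convex combination of spanning trees and C a narrow cut (every spanning tree meets C; x*(C) < 2). Set p_one := Σ_{|S∩C|=1} p_S, p_even := Σ_{|S∩C| even} p_S, and for each tree define a benefit b_{S,C} with b_{S,C} = 1/2 whenever |S∩C| = 1 or |S∩C| is even, and b_{S,C} = 0 otherwise, and let β = 2/5. Then Σ_S p_S b_{S,C} ≥ (β/(1−2β))·(2 − x*(C))·p_even, i.e., (1/2)(p_one + p_even) ≥ 2(2 − x*(C)) p_even. -/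
/-!
Write `n_S = |S ∩ C|`. Every spanning tree crosses the cut, so `n_S ≥ 1`; moreover `n_S ≥ 2`
unless `n_S = 1`, and `n_S ≥ 2` when `n_S` is even. Averaging `x*(C) = Σ p_S n_S` gives
`p_one ≥ 2 - x*(C)` and `p_even ≤ x*(C) - 1`, and with `a = 2 - x*(C)`, `b = p_even` the
bound `4ab ≤ (a + b)² ≤ a + b ≤ p_one + p_even` (trivial when `a ≤ 0`) finishes, since
`β / (1 - 2β) = 2`.
-/

open Finset

theorem IsSpanningTree.inter_cut_nonempty {V : Type*} [Fintype V] [DecidableEq V]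
    {S : Finset (Sym2 V)} (hS : IsSpanningTree S) {U : Finset V} (hU : U.Nonempty)
    (hU' : U ≠ Finset.univ) : (S ∩ cut U).Nonempty := by
  obtain ⟨u, hu⟩ := hU
  obtain ⟨v, -, hv⟩ := exists_of_ssubset (ssubset_univ_iff.2 hU')
  obtain ⟨w⟩ := hS.1.connected.preconnected u v
  obtain ⟨d, -, hd, hd'⟩ := w.exists_boundary_dart (U : Set V) hu hv
  refine ⟨s(d.fst, d.snd), mem_inter.2 ⟨(SimpleGraph.fromEdgeSet_adj _ |>.1 d.adj).1, ?_⟩⟩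
  exact mem_filter.2 ⟨mem_univ _, d.fst, d.snd, rfl, hd, hd'⟩

theorem sum_sum_mul_ite_mem {α ι : Type*} [DecidableEq α] (T : Finset α) (𝒮 : Finset ι)
    (S : ι → Finset α) (p : ι → ℝ) :
    ∑ e ∈ T, ∑ i ∈ 𝒮, p i * (if e ∈ S i then 1 else 0) = ∑ i ∈ 𝒮, p i * #(S i ∩ T) := by
  rw [sum_comm]
  refine sum_congr rfl fun i _ => ?_
  rw [← mul_sum, sum_ite_mem, sum_const, nsmul_one, inter_comm]

section Averages

variable {ι : Type*} (s : Finset ι) (p : ι → ℝ) (k : ι → ℕ)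

theorem two_sub_sum_filter_eq_one_le (hp0 : ∀ i ∈ s, 0 ≤ p i) (hp1 : ∑ i ∈ s, p i = 1)
    (hk : ∀ i ∈ s, 1 ≤ k i) :
    2 - ∑ i ∈ s.filter (fun i => k i = 1), p i ≤ ∑ i ∈ s, p i * k i := by
  have hpoint : ∀ i ∈ s, p i * (2 - if k i = 1 then 1 else 0) ≤ p i * k i := by
    intro i hi
    refine mul_le_mul_of_nonneg_left ?_ (hp0 i hi)
    have := hk i hi
    split_ifs with h
    · norm_num [h]
    · norm_num
      exact_mod_cast (by omega : 2 ≤ k i)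
  calc 2 - ∑ i ∈ s.filter (fun i => k i = 1), p i
      = ∑ i ∈ s, p i * (2 - if k i = 1 then 1 else 0) := by
        simp only [mul_sub, mul_ite, mul_one, mul_zero, sum_sub_distrib, ← sum_filter,
          ← sum_mul, hp1, one_mul]
    _ ≤ ∑ i ∈ s, p i * k i := sum_le_sum hpoint

theorem one_add_sum_filter_even_le (hp0 : ∀ i ∈ s, 0 ≤ p i) (hp1 : ∑ i ∈ s, p i = 1)
    (hk : ∀ i ∈ s, 1 ≤ k i) :
    1 + ∑ i ∈ s.filter (fun i => Even (k i)), p i ≤ ∑ i ∈ s, p i * k i := by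
  have hpoint : ∀ i ∈ s, p i * (1 + if Even (k i) then 1 else 0) ≤ p i * k i := by
    intro i hi
    refine mul_le_mul_of_nonneg_left ?_ (hp0 i hi)
    have := hk i hi
    split_ifs with h
    · obtain ⟨m, hm⟩ := h
      exact_mod_cast (by omega : 1 + 1 ≤ k i)
    · simpa using this
  calc 1 + ∑ i ∈ s.filter (fun i => Even (k i)), p i
      = ∑ i ∈ s, p i * (1 + if Even (k i) then 1 else 0) := by
        simp only [mul_add, mul_ite, mul_one, mul_zero, sum_add_distrib, ← sum_filter, hp1]
    _ ≤ ∑ i ∈ s, p i * k i := sum_le_sum hpoint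

theorem sum_mul_ite_eq_one_or_even (c : ℝ) :
    ∑ i ∈ s, p i * (if k i = 1 ∨ Even (k i) then c else 0) =
      c * (∑ i ∈ s.filter (fun i => k i = 1), p i +
        ∑ i ∈ s.filter (fun i => Even (k i)), p i) := by
  classical
  have hdisj : Disjoint (s.filter (fun i => k i = 1)) (s.filter (fun i => Even (k i))) :=
    disjoint_filter.2 fun i _ h1 h2 => Nat.not_even_one (h1 ▸ h2)
  rw [← sum_union hdisj, ← filter_or, sum_filter, mul_sum]
  exact sum_congr rfl fun i _ => by split_ifs <;> ring

end Averages

theorem four_mul_mul_le_add {a b q : ℝ} (haq : a ≤ q) (hq : 0 ≤ q) (hb : 0 ≤ b)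
    (hab : a + b ≤ 1) : 4 * a * b ≤ q + b := by
  rcases le_total a 0 with ha | ha
  · nlinarith
  · calc 4 * a * b ≤ (a + b) ^ 2 := by nlinarith [sq_nonneg (a - b)]
      _ ≤ a + b := by nlinarith
      _ ≤ q + b := by linarith

theorem benefit_half_suffices_general {V : Type*} [Fintype V] [DecidableEq V]
    (x : Sym2 V → ℝ) (𝒮 : Finset (Finset (Sym2 V)))
    (htree : ∀ S ∈ 𝒮, IsSpanningTree S)
    (p : Finset (Sym2 V) → ℝ) (hp0 : ∀ S ∈ 𝒮, 0 ≤ p S) (hp1 : ∑ S ∈ 𝒮, p S = 1)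
    (hx : ∀ e, x e = ∑ S ∈ 𝒮, p S * (if e ∈ S then 1 else 0))
    (U : Finset V) (hU : U.Nonempty) (hU' : U ≠ Finset.univ)
    (b : Finset (Sym2 V) → ℝ)
    (hb : ∀ S ∈ 𝒮, b S =
      if (S ∩ cut U).card = 1 ∨ Even ((S ∩ cut U).card) then 1/2 else 0) :
    (2/5 : ℝ) / (1 - 2 * (2/5)) * (2 - ∑ e ∈ cut U, x e) *
        (∑ S ∈ 𝒮.filter (fun S => Even ((S ∩ cut U).card)), p S)
      ≤ ∑ S ∈ 𝒮, p S * b S := by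
  have hcross : ∀ S ∈ 𝒮, 1 ≤ #(S ∩ cut U) := fun S hS =>
    card_pos.2 ((htree S hS).inter_cut_nonempty hU hU')
  have hxC : ∑ e ∈ cut U, x e = ∑ S ∈ 𝒮, p S * #(S ∩ cut U) := by
    simp only [hx]
    exact sum_sum_mul_ite_mem (cut U) 𝒮 (fun S => S) p
  have hone := two_sub_sum_filter_eq_one_le 𝒮 p (fun S => #(S ∩ cut U)) hp0 hp1 hcross
  have heven := one_add_sum_filter_even_le 𝒮 p (fun S => #(S ∩ cut U)) hp0 hp1 hcross
  have hbenefit : ∑ S ∈ 𝒮, p S * b S =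
      1/2 * (∑ S ∈ 𝒮.filter (fun S => #(S ∩ cut U) = 1), p S +
        ∑ S ∈ 𝒮.filter (fun S => Even #(S ∩ cut U)), p S) := by
    rw [← sum_mul_ite_eq_one_or_even]
    exact sum_congr rfl fun S hS => by rw [hb S hS]
  have hfinal := four_mul_mul_le_add (a := 2 - ∑ e ∈ cut U, x e)
    (q := ∑ S ∈ 𝒮.filter (fun S => #(S ∩ cut U) = 1), p S)
    (b := ∑ S ∈ 𝒮.filter (fun S => Even #(S ∩ cut U)), p S) (by linarith)
    (sum_nonneg fun S hS => hp0 S (mem_filter.1 hS).1)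
    (sum_nonneg fun S hS => hp0 S (mem_filter.1 hS).1) (by linarith)
  have hcoeff : (2/5 : ℝ) / (1 - 2 * (2/5)) = 2 := by norm_num
  rw [hcoeff, hbenefit]
  linarith

/-- With benefit 1/2 for trees with exactly one or an even number of edges in a
narrow cut and β = 2/5, the total benefit suffices:
Σ p_S b_{S,C} ≥ (β/(1-2β))(2 - x*(C)) p_even. -/
theorem benefit_half_suffices {V : Type*} [Fintype V] [DecidableEq V]
    (x : Sym2 V → ℝ) (𝒮 : Finset (Finset (Sym2 V)))
    (htree : ∀ S ∈ 𝒮, IsSpanningTree S)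
    (p : Finset (Sym2 V) → ℝ) (hp0 : ∀ S ∈ 𝒮, 0 ≤ p S) (hp1 : ∑ S ∈ 𝒮, p S = 1)
    (hx : ∀ e, x e = ∑ S ∈ 𝒮, p S * (if e ∈ S then 1 else 0))
    (U : Finset V) (hU : U.Nonempty) (hU' : U ≠ Finset.univ)
    (hnarrow : ∑ e ∈ cut U, x e < 2)
    (b : Finset (Sym2 V) → ℝ)
    (hb : ∀ S ∈ 𝒮, b S =
      if (S ∩ cut U).card = 1 ∨ Even ((S ∩ cut U).card) then 1/2 else 0) :
    (2/5 : ℝ) / (1 - 2 * (2/5)) * (2 - ∑ e ∈ cut U, x e) *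
        (∑ S ∈ 𝒮.filter (fun S => Even ((S ∩ cut U).card)), p S)
      ≤ ∑ S ∈ 𝒮, p S * b S :=
  benefit_half_suffices_general x 𝒮 htree p hp0 hp1 hx U hU hU' b hb
end

section
/- Let C ⊆ E be a cut, let p be a probability distribution on spanning trees with Σ_S p_S |S∩C| = x*(C) and |S∩C| ≥ 1 for all S in the support, let p_even = Σ_{|S∩C| even} p_S, p_many = Σ_S p_S ⌊(|S∩C|−1)/2⌋, and let ν, β be reals with (2β/(1−2β))(2 − x*(C)) ≥ (4ν−1)/2 ≥ 0 and p_even ≤ x*(C) − 1. Then (2β(2−x*(C))/(1−2β))·p_even + (4ν−1)·p_many ≤ (2β/(1−2β))·(x*(C)−1)·(2−x*(C)). -/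
/-!
Since every tree in the support meets the cut, `⌊(k - 1)/2⌋ = (k - 1 - [k even]) / 2` for its
crossing number `k`, and averaging gives `p_many = (x*(C) - 1 - p_even) / 2`. Writing
`A = 2β(2 - x*(C))/(1 - 2β)` and `c = (4ν - 1)/2`, the left side becomes
`A p_even + c (x*(C) - 1 - p_even)`, which falls short of `A (x*(C) - 1)` by
`(A - c)(x*(C) - 1 - p_even) ≥ 0`.
-/

open Finset

theorem Nat.two_mul_cast_sub_one_div_two {n : ℕ} (hn : 1 ≤ n) :
    2 * (((n - 1) / 2 : ℕ) : ℝ) = n - 1 - if Even n then 1 else 0 := by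
  obtain ⟨m, rfl | rfl⟩ := Nat.even_or_odd' n
  · obtain ⟨m, rfl⟩ : ∃ j, m = j + 1 := ⟨m - 1, by omega⟩
    rw [if_pos (even_two_mul _), show (2 * (m + 1) - 1) / 2 = m by omega]
    push_cast; ring
  · rw [if_neg (Nat.not_even_iff_odd.2 (odd_two_mul_add_one m)),
      show (2 * m + 1 - 1) / 2 = m by omega]
    push_cast; ring

theorem sum_mul_cast_sub_one_div_two {ι : Type*} (s : Finset ι) (p : ι → ℝ) (k : ι → ℕ)
    (hk : ∀ i ∈ s, p i ≠ 0 → 1 ≤ k i) :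
    ∑ i ∈ s, p i * (((k i - 1) / 2 : ℕ) : ℝ)
      = (∑ i ∈ s, p i * k i - ∑ i ∈ s, p i - ∑ i ∈ s with Even (k i), p i) / 2 := by
  rw [sum_filter, ← sum_sub_distrib, ← sum_sub_distrib, sum_div]
  refine sum_congr rfl fun i hi => ?_
  by_cases hp : p i = 0
  · simp [hp]
  · have hki := Nat.two_mul_cast_sub_one_div_two (hk i hi hp)
    split_ifs at hki ⊢ <;> linear_combination (p i / 2) * hki

theorem p_even_p_many_bound_general {V : Type*} [Fintype V] [DecidableEq V]
    (𝒮 : Finset (Finset (Sym2 V)))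
    (p : Finset (Sym2 V) → ℝ) (hp1 : ∑ S ∈ 𝒮, p S = 1)
    (U : Finset V) (xC : ℝ)
    (hxC : ∑ S ∈ 𝒮, p S * ((S ∩ cut U).card : ℝ) = xC)
    (hmeet : ∀ S ∈ 𝒮, p S ≠ 0 → 1 ≤ (S ∩ cut U).card)
    (ν β : ℝ)
    (h1 : (4*ν - 1) / 2 ≤ 2*β / (1 - 2*β) * (2 - xC))
    (h3 : (∑ S ∈ 𝒮.filter (fun S => Even ((S ∩ cut U).card)), p S) ≤ xC - 1) :
    2*β * (2 - xC) / (1 - 2*β) *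
        (∑ S ∈ 𝒮.filter (fun S => Even ((S ∩ cut U).card)), p S)
      + (4*ν - 1) * (∑ S ∈ 𝒮, p S * ((((S ∩ cut U).card - 1) / 2 : ℕ) : ℝ))
    ≤ 2*β / (1 - 2*β) * (xC - 1) * (2 - xC) := by
  rw [sum_mul_cast_sub_one_div_two 𝒮 p _ hmeet, hxC, hp1]
  linear_combination mul_nonneg (sub_nonneg.2 h1) (sub_nonneg.2 h3)

/-- Bounding the combination of p_even and p_many at a cut. -/
theorem p_even_p_many_bound {V : Type*} [Fintype V] [DecidableEq V]
    (𝒮 : Finset (Finset (Sym2 V)))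
    (htree : ∀ S ∈ 𝒮, IsSpanningTree S)
    (p : Finset (Sym2 V) → ℝ) (hp0 : ∀ S ∈ 𝒮, 0 ≤ p S) (hp1 : ∑ S ∈ 𝒮, p S = 1)
    (U : Finset V) (xC : ℝ)
    (hxC : ∑ S ∈ 𝒮, p S * ((S ∩ cut U).card : ℝ) = xC)
    (hmeet : ∀ S ∈ 𝒮, p S ≠ 0 → 1 ≤ (S ∩ cut U).card)
    (ν β : ℝ)
    (h1 : (4*ν - 1) / 2 ≤ 2*β / (1 - 2*β) * (2 - xC))
    (h2 : 0 ≤ (4*ν - 1) / 2)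
    (h3 : (∑ S ∈ 𝒮.filter (fun S => Even ((S ∩ cut U).card)), p S) ≤ xC - 1) :
    2*β * (2 - xC) / (1 - 2*β) *
        (∑ S ∈ 𝒮.filter (fun S => Even ((S ∩ cut U).card)), p S)
      + (4*ν - 1) * (∑ S ∈ 𝒮, p S * ((((S ∩ cut U).card - 1) / 2 : ℕ) : ℝ))
    ≤ 2*β / (1 - 2*β) * (xC - 1) * (2 - xC) :=
  p_even_p_many_bound_general 𝒮 p hp1 U xC hxC hmeet ν β h1 h3
end

section
/- Let 0 ≤ β < 1/2 and let f(x) := β(2−x)(x−1)/(1−2β). Let C be a cut with 1 ≤ x*(C) ≤ 2 and f(x*(C)) ≤ 1/2, let p be a probability distribution over spanning trees with Σ_S p_S|S∩C| = x*(C) and every tree meeting C, and suppose for each tree S in the support a number b_{S,C} ≥ 0 is given such that: b_{S,C} ≥ min{β(2−x*(C))/(1−2β), f(x*(C))} if |S∩C| is even, and b_{S,C} ≥ f(x*(C)) if |S∩C| = 1. Then Σ_S p_S b_{S,C} ≥ (β(2−x*(C))/(1−2β))·p_even, where p_even = Σ_{|S∩C| even} p_S. -/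
open Finset

section WeightedCounts

variable {ι : Type*} {s : Finset ι} {p : ι → ℝ} {k : ι → ℕ}

theorem sum_mul_le_sum_mul_of_le_of_ne_zero {g h : ι → ℝ} (hp : ∀ i ∈ s, 0 ≤ p i)
    (hgh : ∀ i ∈ s, p i ≠ 0 → g i ≤ h i) :
    ∑ i ∈ s, p i * g i ≤ ∑ i ∈ s, p i * h i :=
  sum_le_sum fun i hi => by
    rcases eq_or_ne (p i) 0 with h0 | h0
    · simp [h0]
    · exact mul_le_mul_of_nonneg_left (hgh i hi h0) (hp i hi)

theorem sum_filter_even_le (hp : ∀ i ∈ s, 0 ≤ p i) (hk : ∀ i ∈ s, p i ≠ 0 → 1 ≤ k i) :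
    ∑ i ∈ s with Even (k i), p i ≤ ∑ i ∈ s, p i * k i - ∑ i ∈ s, p i := by
  have key := sum_mul_le_sum_mul_of_le_of_ne_zero (g := fun i => 1 + if Even (k i) then 1 else 0)
    (h := fun i => (k i : ℝ)) hp fun i hi h0 => by
      have hki := hk i hi h0
      split_ifs with he
      · have : k i ≠ 1 := by rintro h1; simp [h1] at he
        norm_cast; omega
      · simpa using hki
  simp only [mul_add, mul_one, sum_add_distrib, mul_ite, mul_zero, ← sum_filter] at key
  linarith

theorem two_mul_sum_sub_le_sum_filter_eq_one (hp : ∀ i ∈ s, 0 ≤ p i)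
    (hk : ∀ i ∈ s, p i ≠ 0 → 1 ≤ k i) :
    2 * ∑ i ∈ s, p i - ∑ i ∈ s, p i * k i ≤ ∑ i ∈ s with k i = 1, p i := by
  have key := sum_mul_le_sum_mul_of_le_of_ne_zero (g := fun i => 2 - if k i = 1 then 1 else 0)
    (h := fun i => (k i : ℝ)) hp fun i hi h0 => by
      have hki := hk i hi h0
      split_ifs with h1
      · norm_num [h1]
      · norm_num; omega
  simp only [mul_sub, sum_sub_distrib, mul_ite, mul_one, mul_zero, ← sum_filter, ← mul_sum,
    mul_comm _ (2 : ℝ)] at key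
  linarith

theorem mul_add_sum_filter_le_sum_mul {b : ι → ℝ} {c : ℝ} (hp : ∀ i ∈ s, 0 ≤ p i)
    (hb0 : ∀ i ∈ s, p i ≠ 0 → 0 ≤ b i)
    (heven : ∀ i ∈ s, p i ≠ 0 → Even (k i) → c ≤ b i)
    (hone : ∀ i ∈ s, p i ≠ 0 → k i = 1 → c ≤ b i) :
    c * (∑ i ∈ s with Even (k i), p i + ∑ i ∈ s with k i = 1, p i) ≤ ∑ i ∈ s, p i * b i := by
  have key := sum_mul_le_sum_mul_of_le_of_ne_zero
    (g := fun i => c * ((if Even (k i) then 1 else 0) + if k i = 1 then 1 else 0)) hp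
    fun i hi h0 => by
      by_cases he : Even (k i)
      · have h1 : k i ≠ 1 := by rintro h1; simp [h1] at he
        simpa [he, h1] using heven i hi h0 he
      · by_cases h1 : k i = 1
        · simpa [he, h1] using hone i hi h0 h1
        · simpa [he, h1] using hb0 i hi h0
  simp only [mul_add, sum_add_distrib, mul_ite, mul_one, mul_zero, ← sum_filter] at key
  rw [mul_add, mul_sum, mul_sum]
  simpa only [mul_comm c] using key

theorem mul_sum_filter_even_le_sum_mul {b : ι → ℝ} {A x : ℝ} (hA : 0 ≤ A) (hx2 : x ≤ 2)
    (hp : ∀ i ∈ s, 0 ≤ p i) (hp1 : ∑ i ∈ s, p i = 1) (hx : ∑ i ∈ s, p i * k i = x)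
    (hk : ∀ i ∈ s, p i ≠ 0 → 1 ≤ k i) (hb0 : ∀ i ∈ s, p i ≠ 0 → 0 ≤ b i)
    (heven : ∀ i ∈ s, p i ≠ 0 → Even (k i) → A * (x - 1) ≤ b i)
    (hone : ∀ i ∈ s, p i ≠ 0 → k i = 1 → A * (x - 1) ≤ b i) :
    A * ∑ i ∈ s with Even (k i), p i ≤ ∑ i ∈ s, p i * b i := by
  set pe := ∑ i ∈ s with Even (k i), p i
  set po := ∑ i ∈ s with k i = 1, p i
  have hpe0 : 0 ≤ pe := sum_nonneg fun i hi => hp i (mem_filter.mp hi).1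
  have hpe : pe ≤ x - 1 := by simpa [hx, hp1] using sum_filter_even_le hp hk
  have hpo : 2 - x ≤ po := by simpa [hx, hp1] using two_mul_sum_sub_le_sum_filter_eq_one hp hk
  have hbenefit := mul_add_sum_filter_le_sum_mul hp hb0 heven hone
  nlinarith [mul_nonneg (mul_nonneg hA (sub_nonneg.mpr hx2)) (sub_nonneg.mpr hpe),
    mul_nonneg (mul_nonneg hA (hpe0.trans hpe)) (sub_nonneg.mpr hpo)]

end WeightedCounts

theorem less_critical_benefit_general {V : Type*} [Fintype V] [DecidableEq V]
    (β : ℝ) (hβ0 : 0 ≤ β) (hβ2 : β < 1/2)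
    (f : ℝ → ℝ) (hf : ∀ y, f y = β * (2 - y) * (y - 1) / (1 - 2*β))
    (𝒮 : Finset (Finset (Sym2 V)))
    (p : Finset (Sym2 V) → ℝ) (hp0 : ∀ S ∈ 𝒮, 0 ≤ p S) (hp1 : ∑ S ∈ 𝒮, p S = 1)
    (U : Finset V) (xC : ℝ) (hxC2 : xC ≤ 2)
    (hxCsum : ∑ S ∈ 𝒮, p S * ((S ∩ cut U).card : ℝ) = xC)
    (hmeet : ∀ S ∈ 𝒮, p S ≠ 0 → 1 ≤ (S ∩ cut U).card)
    (b : Finset (Sym2 V) → ℝ)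
    (hb0 : ∀ S ∈ 𝒮, p S ≠ 0 → 0 ≤ b S)
    (hbeven : ∀ S ∈ 𝒮, p S ≠ 0 → Even ((S ∩ cut U).card) →
      min (β * (2 - xC) / (1 - 2*β)) (f xC) ≤ b S)
    (hbone : ∀ S ∈ 𝒮, p S ≠ 0 → (S ∩ cut U).card = 1 → f xC ≤ b S) :
    β * (2 - xC) / (1 - 2*β) *
        (∑ S ∈ 𝒮.filter (fun S => Even ((S ∩ cut U).card)), p S)
      ≤ ∑ S ∈ 𝒮, p S * b S := by
  set A := β * (2 - xC) / (1 - 2*β)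
  have hA : 0 ≤ A := div_nonneg (mul_nonneg hβ0 (by linarith)) (by linarith)
  have hfA : f xC = A * (xC - 1) := by rw [hf, div_mul_eq_mul_div]
  have hmin : min A (f xC) = A * (xC - 1) := by
    rw [hfA, min_eq_right]; nlinarith
  refine mul_sum_filter_even_le_sum_mul hA hxC2 hp0 hp1 hxCsum hmeet hb0 ?_ ?_
  · exact fun S hS h0 he => hmin ▸ hbeven S hS h0 he
  · exact fun S hS h0 h1 => hfA ▸ hbone S hS h0 h1

/-- Lemma 8 (less critical cuts): if the benefits satisfy the stated lower
bounds, then the total benefit at a cut C with f(x*(C)) ≤ 1/2 is at least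
(β(2-x*(C))/(1-2β)) · p_even. -/
theorem less_critical_benefit {V : Type*} [Fintype V] [DecidableEq V]
    (β : ℝ) (hβ0 : 0 ≤ β) (hβ2 : β < 1/2)
    (f : ℝ → ℝ) (hf : ∀ y, f y = β * (2 - y) * (y - 1) / (1 - 2*β))
    (𝒮 : Finset (Finset (Sym2 V)))
    (htree : ∀ S ∈ 𝒮, IsSpanningTree S)
    (p : Finset (Sym2 V) → ℝ) (hp0 : ∀ S ∈ 𝒮, 0 ≤ p S) (hp1 : ∑ S ∈ 𝒮, p S = 1)
    (U : Finset V) (xC : ℝ) (hxC1 : 1 ≤ xC) (hxC2 : xC ≤ 2)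
    (hfxC : f xC ≤ 1/2)
    (hxCsum : ∑ S ∈ 𝒮, p S * ((S ∩ cut U).card : ℝ) = xC)
    (hmeet : ∀ S ∈ 𝒮, p S ≠ 0 → 1 ≤ (S ∩ cut U).card)
    (b : Finset (Sym2 V) → ℝ)
    (hb0 : ∀ S ∈ 𝒮, p S ≠ 0 → 0 ≤ b S)
    (hbeven : ∀ S ∈ 𝒮, p S ≠ 0 → Even ((S ∩ cut U).card) →
      min (β * (2 - xC) / (1 - 2*β)) (f xC) ≤ b S)
    (hbone : ∀ S ∈ 𝒮, p S ≠ 0 → (S ∩ cut U).card = 1 → f xC ≤ b S) :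
    β * (2 - xC) / (1 - 2*β) *
        (∑ S ∈ 𝒮.filter (fun S => Even ((S ∩ cut U).card)), p S)
      ≤ ∑ S ∈ 𝒮, p S * b S :=
  less_critical_benefit_general β hβ0 hβ2 f hf 𝒮 p hp0 hp1 U xC hxC2 hxCsum hmeet b hb0 hbeven hbone
end

section
/- Let (V,S₁) and (V,S₂) be spanning trees of the complete graph on V with s ≠ t, and let δ(L_h), δ(L_i) be two cuts from the narrow-cut chain with h < i (so s ∈ L_h ⊂ L_i, t ∉ L_i). Suppose S₂ ∩ δ(L_i) = {e₂}, S₁ ∩ δ(L_i) = {e₀, e₁} with S₁ ∩ δ(L_h) = {e₀}, and e₂ ∉ δ(L_h). Then S₁' := (S₁ \ {e₁}) ∪ {e₂} and S₂' := (S₂ \ {e₂}) ∪ {e₁} are both edge sets of spanning trees, and S₁' ∩ δ(L_i) = {e₀, e₂}, S₂' ∩ δ(L_i) = {e₁}. -/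
/-!
Every edge of `S₁` crossing `L_i △ L_h` crosses exactly one of `L_i`, `L_h`, so `e₁` is the only
edge of `S₁` in the cut of `L_i △ L_h`, while `e₂` lies in that cut; likewise `e₂` is the only edge
of `S₂` in the cut of `L_i`, which contains `e₁`. Both trees are therefore instances of the
fundamental cut exchange: if `e` is the only tree edge crossing `W` and `f` crosses `W`, then
swapping `e` for `f` gives a tree. No edge of the forest `S \ {e}` crosses `W`, so the ends of `f`
lie in different components of it and adding `f` keeps it acyclic; the result is connected
because adding `e` to it gives `S ∪ {f}`, which contains a cycle, so the ends of `e` are already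
joined in it.
-/

open Finset

open SimpleGraph
open scoped symmDiff

section

variable {V : Type*}

theorem SimpleGraph.Reachable.mem_iff_of_forall_adj {G : SimpleGraph V} {W : Set V}
    (hW : ∀ a b, G.Adj a b → (a ∈ W ↔ b ∈ W)) {a b : V} (hab : G.Reachable a b) :
    a ∈ W ↔ b ∈ W := by
  obtain ⟨p⟩ := hab
  induction p with
  | nil => rfl
  | cons hadj _ ih => exact (hW _ _ hadj).trans ih

theorem SimpleGraph.Reachable.of_sup_edge {G : SimpleGraph V} {x y a b : V}
    (hxy : G.Reachable x y) (hab : (G ⊔ edge x y).Reachable a b) : G.Reachable a b := by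
  rw [reachable_iff_reflTransGen] at hab ⊢
  refine Relation.reflTransGen_closed (fun c d hcd => ?_) _ _ hab
  rw [← reachable_iff_reflTransGen]
  rcases hcd with hcd | hcd
  · exact hcd.reachable
  · rw [edge_adj] at hcd
    obtain ⟨⟨rfl, rfl⟩ | ⟨rfl, rfl⟩, -⟩ := hcd
    exacts [hxy, hxy.symm]

theorem SimpleGraph.IsTree.sup_edge_swap {K : SimpleGraph V} {x y u v : V}
    (hT : (K ⊔ edge x y).IsTree) (hK : ¬K.Reachable u v) (hT_uv : ¬(K ⊔ edge x y).Adj u v) :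
    (K ⊔ edge u v).IsTree := by
  have hacyclic : (K ⊔ edge u v).IsAcyclic :=
    (hT.isAcyclic.anti le_sup_left).sup_edge_of_not_reachable hK
  have hxy : (K ⊔ edge u v).Reachable x y := by
    by_contra h
    have hcycle := hacyclic.sup_edge_of_not_reachable h
    rw [sup_right_comm, isAcyclic_sup_fromEdgeSet_iff] at hcycle
    rcases hcycle.2 (hT.connected.preconnected u v) with rfl | hadj
    exacts [hK .rfl, hT_uv hadj]
  refine ⟨(connected_iff _).2 ⟨fun a b => hxy.of_sup_edge ?_, hT.connected.nonempty⟩, hacyclic⟩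
  rw [sup_right_comm]
  exact (hT.connected.preconnected a b).mono le_sup_left

variable [Fintype V] [DecidableEq V]

theorem mem_cut {U : Finset V} {u v : V} : s(u, v) ∈ cut U ↔ ¬(u ∈ U ↔ v ∈ U) := by
  simp only [cut, mem_filter, mem_univ, true_and, Sym2.eq_iff]
  constructor
  · rintro ⟨a, b, ⟨rfl, rfl⟩ | ⟨rfl, rfl⟩, ha, hb⟩ <;> tauto
  · intro h
    by_cases hu : u ∈ U
    · exact ⟨u, v, Or.inl ⟨rfl, rfl⟩, hu, by tauto⟩
    · exact ⟨v, u, Or.inr ⟨rfl, rfl⟩, by tauto, hu⟩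

theorem cut_symmDiff (A B : Finset V) : cut (A ∆ B) = cut A ∆ cut B := by
  ext e
  induction e using Sym2.ind with
  | h u v =>
    simp only [Finset.mem_symmDiff, mem_cut]
    tauto

theorem IsSpanningTree.exchange {S : Finset (Sym2 V)} (hS : IsSpanningTree S) {W : Finset V}
    {e f : Sym2 V} (he : S ∩ cut W = {e}) (hf : f ∈ cut W) :
    IsSpanningTree (S \ {e} ∪ {f}) := by
  induction f using Sym2.ind with | h u v => ?_
  induction e using Sym2.ind with | h x y => ?_
  have hxyS : s(x, y) ∈ S := (mem_inter.1 (he ▸ mem_singleton_self _)).1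
  by_cases huvS : s(u, v) ∈ S
  · have : s(u, v) = s(x, y) := mem_singleton.1 (he ▸ mem_inter.2 ⟨huvS, hf⟩)
    rwa [this, sdiff_union_self_eq_union, union_eq_left.2 (singleton_subset_iff.2 hxyS)]
  set K : SimpleGraph V := fromEdgeSet ↑(S \ {s(x, y)})
  have hG : fromEdgeSet ↑S = K ⊔ edge x y := by
    rw [edge, ← fromEdgeSet_union, ← coe_singleton, ← coe_union, sdiff_union_self_eq_union,
      union_eq_left.2 (singleton_subset_iff.2 hxyS)]
  have hG' : fromEdgeSet ↑(S \ {s(x, y)} ∪ {s(u, v)}) = K ⊔ edge u v := by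
    rw [edge, ← fromEdgeSet_union, coe_union, coe_singleton]
  have hK_cross : ∀ a b, K.Adj a b → (a ∈ (W : Set V) ↔ b ∈ (W : Set V)) := by
    intro a b hab
    rw [fromEdgeSet_adj, coe_sdiff, Set.mem_sdiff, coe_singleton, Set.mem_singleton_iff] at hab
    by_contra hcross
    exact hab.1.2 (mem_singleton.1 (he ▸ mem_inter.2 ⟨hab.1.1, mem_cut.2 hcross⟩))
  have hK_uv : ¬K.Reachable u v := fun h => mem_cut.1 hf (h.mem_iff_of_forall_adj hK_cross)
  have hG_uv : ¬(K ⊔ edge x y).Adj u v := by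
    rw [← hG, fromEdgeSet_adj]
    exact fun h => huvS h.1
  refine ⟨hG' ▸ (hG ▸ hS.1).sup_edge_swap hK_uv hG_uv, fun e he' => ?_⟩
  rcases mem_union.1 he' with he' | he'
  · exact hS.2 e (mem_sdiff.1 he').1
  · rw [mem_singleton.1 he', Sym2.mk_isDiag_iff]
    rintro rfl
    exact mem_cut.1 hf Iff.rfl

end

theorem reassemble_exchange_general {V : Type*} [Fintype V] [DecidableEq V]
    (S₁ S₂ : Finset (Sym2 V)) (hS₁ : IsSpanningTree S₁) (hS₂ : IsSpanningTree S₂)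
    (Lh Li : Finset V)
    (e₀ e₁ e₂ : Sym2 V) (hne : e₀ ≠ e₁)
    (h2i : S₂ ∩ cut Li = {e₂})
    (h1i : S₁ ∩ cut Li = {e₀, e₁})
    (h1h : S₁ ∩ cut Lh = {e₀})
    (h2h : e₂ ∉ cut Lh) :
    IsSpanningTree ((S₁ \ {e₁}) ∪ {e₂}) ∧
    IsSpanningTree ((S₂ \ {e₂}) ∪ {e₁}) ∧
    ((S₁ \ {e₁}) ∪ {e₂}) ∩ cut Li = {e₀, e₂} ∧
    ((S₂ \ {e₂}) ∪ {e₁}) ∩ cut Li = {e₁} := by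
  have he₁ : e₁ ∈ cut Li := (mem_inter.1 (h1i ▸ mem_insert_of_mem (mem_singleton_self e₁))).2
  have he₂ : e₂ ∈ cut Li := (mem_inter.1 (h2i ▸ mem_singleton_self e₂)).2
  have h1W : S₁ ∩ cut (Li ∆ Lh) = {e₁} := by
    rw [cut_symmDiff, ← inf_eq_inter, inf_symmDiff_distrib_left, inf_eq_inter, inf_eq_inter,
      h1i, h1h]
    ext e
    simp only [Finset.mem_symmDiff, mem_insert, mem_singleton]
    grind
  refine ⟨hS₁.exchange h1W ?_, hS₂.exchange h2i he₁, ?_, ?_⟩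
  · rw [cut_symmDiff]
    exact Finset.mem_symmDiff.2 (Or.inl ⟨he₂, h2h⟩)
  · rw [union_inter_distrib_right, sdiff_inter_right_comm, h1i, singleton_inter_of_mem he₂]
    ext e
    simp only [mem_union, mem_sdiff, mem_insert, mem_singleton]
    grind
  · rw [union_inter_distrib_right, sdiff_inter_right_comm, h2i, singleton_inter_of_mem he₁]
    simp

/-- The core exchange step of the reassembling lemma: swapping the edges e₁
and e₂ between the two trees yields two new spanning trees with the stated
intersections with the cut δ(L_i). -/
theorem reassemble_exchange {V : Type*} [Fintype V] [DecidableEq V]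
    (s t : V) (hst : s ≠ t)
    (S₁ S₂ : Finset (Sym2 V)) (hS₁ : IsSpanningTree S₁) (hS₂ : IsSpanningTree S₂)
    (Lh Li : Finset V) (hsub : Lh ⊂ Li) (hs : s ∈ Lh) (ht : t ∉ Li)
    (e₀ e₁ e₂ : Sym2 V) (hne : e₀ ≠ e₁)
    (h2i : S₂ ∩ cut Li = {e₂})
    (h1i : S₁ ∩ cut Li = {e₀, e₁})
    (h1h : S₁ ∩ cut Lh = {e₀})
    (h2h : e₂ ∉ cut Lh) :
    IsSpanningTree ((S₁ \ {e₁}) ∪ {e₂}) ∧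
    IsSpanningTree ((S₂ \ {e₂}) ∪ {e₁}) ∧
    ((S₁ \ {e₁}) ∪ {e₂}) ∩ cut Li = {e₀, e₂} ∧
    ((S₂ \ {e₂}) ∪ {e₁}) ∩ cut Li = {e₁} :=
  reassemble_exchange_general S₁ S₂ hS₁ hS₂ Lh Li e₀ e₁ e₂ hne h2i h1i h1h h2h
end
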